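/- arXiv:math/0101081 — 9 statements merged into one kernel-verified Lean document; each statement's English description precedes it below -/
import Mathlib

section
/- Let I be a monomial ideal in the polynomial ring R = K[x_1,...,x_n] all of whose minimal generators have the same degree. Suppose I satisfies the exchange property: for all u, v in G(I) and all i with ν_i(u) > ν_i(v), there exists j with ν_j(v) > ν_j(u) such that x_j·(u/x_i) ∈ G(I). Then I has linear quotients with respect to the reverse lexicographic order of the generators, i.e., for each u ∈ G(I), if J is the ideal generated by all v ∈ G(I) with v > u in reverse lexicographic order, then J : u is generated by variables. -/
/-!
Let `u ∈ G` and let `v ∈ G` be larger than `u` in the reverse lexicographic order, so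
`v i < u i` at the last index `i` where they differ. The exchange property applied to `u`, `v`
and `i` yields `j` with `u j < v j` and `u' = u / x_i * x_j ∈ G`. Since `u` and `v` agree after
`i`, we have `j < i`, so `u'` is again larger than `u`, and `u'` divides `x_j u`. Hence `x_j`
lies in the colon ideal, and it divides every monomial `w` with `v ∣ w u`, because
`u j < v j ≤ w j + u j`. As the colon of a monomial ideal by a monomial is again a monomial
ideal, it is therefore generated by these variables.
-/

/-- A monomial in `n` variables, recorded by its exponent vector. -/
abbrev Mon (n : ℕ) := Fin n → ℕ

/-- total degree of a monomial -/
def mdeg {n : ℕ} (a : Mon n) : ℕ := ∑ i, a i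

/-- `RevLexGT a b` : `a` is strictly greater than `b` in the reverse
lexicographic order (the greater monomial is the one which is *smaller* at the
last index where they differ). -/
def RevLexGT {n : ℕ} (a b : Mon n) : Prop :=
  ∃ i, a i < b i ∧ ∀ j, i < j → a j = b j

/-- The monomial `x^a` in `K[x_1,…,x_n]`. -/
noncomputable def toMon (K : Type*) [CommSemiring K] {n : ℕ} (a : Mon n) :
    MvPolynomial (Fin n) K :=
  MvPolynomial.monomial (Finsupp.equivFunOnFinite.symm a) 1

namespace MvPolynomial

variable {σ R : Type*} [CommSemiring R]

theorem support_mul_monomial_one (p : MvPolynomial σ R) (s : σ →₀ ℕ) :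
    (p * monomial s 1).support = p.support.map (addRightEmbedding s) :=
  AddMonoidAlgebra.support_coeff_mul_single p 1 (by simp) s

theorem mem_colon_span_monomial_iff {T : Set (σ →₀ ℕ)} {d : σ →₀ ℕ}
    {f : MvPolynomial σ R} :
    f ∈ (Ideal.span ((fun s => monomial s (1 : R)) '' T)).colon
        (Ideal.span {monomial d (1 : R)}) ↔
      ∀ m ∈ f.support, ∃ s ∈ T, s ≤ m + d := by
  rw [Ideal.mem_colon_span_singleton, mem_ideal_span_monomial_image, support_mul_monomial_one]
  simp

theorem colon_span_monomial_eq_span_X {T : Set (σ →₀ ℕ)} {d : σ →₀ ℕ} (S : Set σ)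
    (hS : ∀ i ∈ S, ∃ s ∈ T, s ≤ Finsupp.single i 1 + d)
    (hT : ∀ m : σ →₀ ℕ, (∃ s ∈ T, s ≤ m + d) → ∃ i ∈ S, m i ≠ 0) :
    (Ideal.span ((fun s => monomial s (1 : R)) '' T)).colon (Ideal.span {monomial d (1 : R)}) =
      Ideal.span (X '' S) := by
  ext f
  rw [mem_colon_span_monomial_iff, mem_ideal_span_X_image]
  refine ⟨fun h m hm => hT m (h m hm), fun h m hm => ?_⟩
  obtain ⟨i, hiS, hmi⟩ := h m hm
  obtain ⟨s, hsT, hs⟩ := hS i hiS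
  have hi : Finsupp.single i 1 ≤ m := Finsupp.single_le_iff.2 (Nat.one_le_iff_ne_zero.2 hmi)
  exact ⟨s, hsT, hs.trans (add_le_add_left hi d)⟩

end MvPolynomial

def ExchangeProperty {n : ℕ} (G : Set (Mon n)) : Prop :=
  ∀ u ∈ G, ∀ v ∈ G, ∀ i : Fin n, v i < u i →
    ∃ j : Fin n, u j < v j ∧ (u - Pi.single i 1 + Pi.single j 1) ∈ G

theorem revLexGT_sub_single_add_single {n : ℕ} {u : Mon n} {i j : Fin n} (hji : j < i)
    (hi : 0 < u i) : RevLexGT (u - Pi.single i 1 + Pi.single j 1) u := by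
  refine ⟨i, ?_, fun k hk => ?_⟩
  · simp [hji.ne', hi]
  · simp [hk.ne', (hji.trans hk).ne']

theorem ExchangeProperty.exists_revLexGT_le_add_single {n : ℕ} {G : Set (Mon n)}
    (hG : ExchangeProperty G) {u v : Mon n} (hu : u ∈ G) (hv : v ∈ G) (hvu : RevLexGT v u) :
    ∃ j, u j < v j ∧ ∃ v' ∈ G, RevLexGT v' u ∧ v' ≤ u + Pi.single j 1 := by
  obtain ⟨i, hi, hagree⟩ := hvu
  obtain ⟨j, hj, hmem⟩ := hG u hu v hv i hi
  have hji : j < i := by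
    rcases lt_trichotomy j i with h | rfl | h
    · exact h
    · omega
    · have := hagree j h; omega
  refine ⟨j, hj, _, hmem, revLexGT_sub_single_add_single hji (by omega), fun k => ?_⟩
  simp only [Pi.add_apply, Pi.sub_apply]
  omega

theorem stmt0_general {K : Type*} [Field K] {n : ℕ} (G : Finset (Mon n))
    -- the exchange property
    (hexch : ∀ u ∈ G, ∀ v ∈ G, ∀ i : Fin n, v i < u i →
      ∃ j : Fin n, u j < v j ∧ (u - Pi.single i 1 + Pi.single j 1) ∈ G) :
    -- linear quotients for the reverse lexicographic order: for each
    -- generator `u`, the colon ideal `J : u` (with `J` generated by the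
    -- generators which are greater than `u`) is generated by variables
    ∀ u ∈ G, ∃ S : Set (Fin n),
      (Ideal.span {p : MvPolynomial (Fin n) K | ∃ v ∈ G, RevLexGT v u ∧ p = toMon K v}).colon
          (Ideal.span {toMon K u}) =
        Ideal.span ((fun i => (MvPolynomial.X i : MvPolynomial (Fin n) K)) '' S) := by
  intro u hu
  have hJ : {p : MvPolynomial (Fin n) K | ∃ v ∈ G, RevLexGT v u ∧ p = toMon K v} =
      (fun s => MvPolynomial.monomial s (1 : K)) ''
        (Finsupp.equivFunOnFinite.symm '' {v | v ∈ G ∧ RevLexGT v u}) := by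
    ext p
    simp [Set.image_image, toMon, and_assoc, eq_comm]
  refine ⟨{j | ∃ v ∈ G, RevLexGT v u ∧ v ≤ u + Pi.single j 1}, ?_⟩
  rw [hJ]
  apply MvPolynomial.colon_span_monomial_eq_span_X
  · rintro j ⟨v, hv, hvu, hle⟩
    refine ⟨_, ⟨v, ⟨hv, hvu⟩, rfl⟩, ?_⟩
    rw [← Finsupp.coe_le_coe, Finsupp.coe_add, Finsupp.single_eq_pi_single, add_comm]
    exact hle
  · rintro m ⟨_, ⟨v, ⟨hv, hvu⟩, rfl⟩, hle⟩
    obtain ⟨j, hj, v', hv', hv'u, hv'le⟩ :=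
      ExchangeProperty.exists_revLexGT_le_add_single hexch hu hv hvu
    have hvj : v j ≤ m j + u j := Finsupp.le_def.1 hle j
    exact ⟨j, ⟨v', hv', hv'u, hv'le⟩, by omega⟩

theorem stmt0 {K : Type*} [Field K] {n : ℕ} (G : Finset (Mon n))
    -- all minimal generators have the same degree
    (hdeg : ∀ a ∈ G, ∀ b ∈ G, mdeg a = mdeg b)
    -- `G` is a minimal system of monomial generators
    (hmin : ∀ a ∈ G, ∀ b ∈ G, a ≤ b → a = b)
    -- the exchange property
    (hexch : ∀ u ∈ G, ∀ v ∈ G, ∀ i : Fin n, v i < u i →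
      ∃ j : Fin n, u j < v j ∧ (u - Pi.single i 1 + Pi.single j 1) ∈ G) :
    -- linear quotients for the reverse lexicographic order: for each
    -- generator `u`, the colon ideal `J : u` (with `J` generated by the
    -- generators which are greater than `u`) is generated by variables
    ∀ u ∈ G, ∃ S : Set (Fin n),
      (Ideal.span {p : MvPolynomial (Fin n) K | ∃ v ∈ G, RevLexGT v u ∧ p = toMon K v}).colon
          (Ideal.span {toMon K u}) =
        Ideal.span ((fun i => (MvPolynomial.X i : MvPolynomial (Fin n) K)) '' S) :=
  stmt0_general G hexch
end

section
/- Let I be a monomial ideal with linear quotients with respect to the order u_1,...,u_m of its minimal generators. For a monomial u ∈ I, define g(u) = u_j where j is the smallest index such that u ∈ (u_1,...,u_j). Then g(u) divides u, and writing u = g(u)·c(u), one has set(g(u)) ∩ supp(c(u)) = ∅. -/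
/-- support of a monomial -/
def msupp {n : ℕ} (a : Mon n) : Finset (Fin n) := Finset.univ.filter fun i => a i ≠ 0

/-- `w ∈ (u_0, …, u_{j-1})` for the monomial ideal generated by the first `j`
of the monomials `u i`. -/
def inPrev {n m : ℕ} (u : Fin m → Mon n) (j : Fin m) (w : Mon n) : Prop :=
  ∃ i < j, u i ≤ w

/-- `set(u_j) = {k : x_k ∈ (u_0,…,u_{j-1}) : u_j}`. -/
def setU {n m : ℕ} (u : Fin m → Mon n) (j : Fin m) : Set (Fin n) :=
  {k | inPrev u j (Pi.single k 1 + u j)}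

/-- `u_0, …, u_{m-1}` has linear quotients: each colon ideal
`(u_0,…,u_{j-1}) : u_j` is generated by the variables it contains, i.e. every
monomial `w` in the colon ideal is divisible by a variable of the colon
ideal. -/
def HasLinearQuotients {n m : ℕ} (u : Fin m → Mon n) : Prop :=
  ∀ j : Fin m, ∀ w : Mon n, inPrev u j (w + u j) → ∃ k ∈ setU u j, k ∈ msupp w

open Classical in
/-- the index of `g(v)`: the smallest `j` with `v ∈ (u_0,…,u_j)`, equivalently
the smallest `j` such that `u j` divides `v`. -/
noncomputable def gIdx {n m : ℕ} (u : Fin m → Mon n) (v : Mon n)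
    (h : ∃ j, u j ≤ v) : Fin m :=
  (Finset.univ.filter fun j => u j ≤ v).min' (by
    obtain ⟨j, hj⟩ := h; exact ⟨j, by simp [hj]⟩)

theorem stmt1 {n m : ℕ} (u : Fin m → Mon n)
    (hmin : ∀ i j : Fin m, u i ≤ u j → i = j)
    (hlq : HasLinearQuotients u)
    (v : Mon n) (hv : ∃ j, u j ≤ v) :
    u (gIdx u v hv) ≤ v ∧
      ∀ k ∈ setU u (gIdx u v hv), k ∉ msupp (v - u (gIdx u v hv)) := by
  classical
  set j := gIdx u v hv with hjdef
  have hjmem : j ∈ Finset.univ.filter fun j => u j ≤ v :=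
    Finset.min'_mem _ _
  have hjle : u j ≤ v := (Finset.mem_filter.mp hjmem).2
  refine ⟨hjle, ?_⟩
  intro k hk hmem
  obtain ⟨i, hij, hi⟩ := hk
  have hvk : u j k < v k := by
    have : (v - u j) k ≠ 0 := by
      simpa [msupp] using hmem
    have : v k - u j k ≠ 0 := this
    omega
  have hle : Pi.single k 1 + u j ≤ v := by
    intro l
    by_cases hlk : l = k
    · subst hlk
      simp [Pi.single_apply]
      omega
    · simpa [Pi.single_apply, hlk] using hjle l
  have : u i ≤ v := le_trans hi hle
  have himem : i ∈ Finset.univ.filter fun j => u j ≤ v := by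
    simp [this]
  have := Finset.min'_le _ _ himem
  exact absurd hij (not_lt.mpr this)
end

section
/- Let I be a monomial ideal with linear quotients with respect to u_1,...,u_m and let g: M(I) → G(I) be the decomposition function. If u ∈ M(I) and u = v·w with v ∈ G(I) and set(v) ∩ supp(w) = ∅, then v = g(u). In particular, the decomposition is unique. -/
theorem stmt2 {n m : ℕ} (u : Fin m → Mon n)
    (hmin : ∀ i j : Fin m, u i ≤ u j → i = j)
    (hlq : HasLinearQuotients u)
    (j : Fin m) (w : Mon n)
    -- `set(u_j) ∩ supp(w) = ∅`
    (hdisj : ∀ k ∈ setU u j, k ∉ msupp w) :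
    -- then `u_j = g(u_j · w)`
    u (gIdx u (w + u j) ⟨j, le_add_self⟩) = u j := by
  classical
  set i := gIdx u (w + u j) ⟨j, le_add_self⟩ with hi
  have hmem : i ∈ (Finset.univ.filter fun k => u k ≤ w + u j) :=
    Finset.min'_mem _ _
  have hle : u i ≤ w + u j := (Finset.mem_filter.mp hmem).2
  have hij : i ≤ j := Finset.min'_le _ j (by simp)
  rcases lt_or_eq_of_le hij with hlt | heq
  · exfalso
    obtain ⟨k, hk, hks⟩ := hlq j w ⟨i, hlt, hle⟩
    exact hdisj k hk hks
  · rw [heq]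
end

section
/- Let I be a monomial ideal with linear quotients and decomposition function g: M(I) → G(I). For monomials u, v ∈ M(I), one has g(uv) = g(u) if and only if set(g(u)) ∩ supp(v) = ∅. -/
lemma gIdx_le {n m : ℕ} (u : Fin m → Mon n) (v : Mon n) (h : ∃ j, u j ≤ v) :
    u (gIdx u v h) ≤ v := by
  classical
  have := Finset.min'_mem (Finset.univ.filter fun j => u j ≤ v)
    (by obtain ⟨j, hj⟩ := h; exact ⟨j, by simp [hj]⟩)
  simpa [gIdx] using this

lemma gIdx_min {n m : ℕ} (u : Fin m → Mon n) (v : Mon n) (h : ∃ j, u j ≤ v)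
    (i : Fin m) (hi : u i ≤ v) : gIdx u v h ≤ i := by
  classical
  exact Finset.min'_le _ _ (by simpa using hi)

theorem stmt3 {n m : ℕ} (u : Fin m → Mon n)
    (hmin : ∀ i j : Fin m, u i ≤ u j → i = j)
    (hlq : HasLinearQuotients u)
    (v w : Mon n) (hv : ∃ j, u j ≤ v) :
    -- `g(v·w) = g(v)` iff `set(g(v)) ∩ supp(w) = ∅`
    u (gIdx u (v + w) (hv.imp fun _ hj => hj.trans le_self_add)) = u (gIdx u v hv) ↔
      ∀ k ∈ setU u (gIdx u v hv), k ∉ msupp w := by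
  set hv' : ∃ j, u j ≤ v + w := hv.imp fun _ hj => hj.trans le_self_add with hv'def
  set J := gIdx u v hv with hJ
  set J' := gIdx u (v + w) hv' with hJ'
  have hJle : u J ≤ v := gIdx_le u v hv
  have hJ'le : u J' ≤ v + w := gIdx_le u (v + w) hv'
  have hJ'J : J' ≤ J := gIdx_min u (v + w) hv' J (hJle.trans le_self_add)
  constructor
  · intro heq k hk hkw
    have hJ'eq : J' = J := hmin _ _ heq.le
    obtain ⟨i, hiJ, hiu⟩ := hk
    have hile : u i ≤ v + w := by
      refine hiu.trans ?_
      intro t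
      rcases eq_or_ne t k with rfl | ht
      · simp only [Pi.add_apply, Pi.single_eq_same]
        have : 1 ≤ w t := Nat.one_le_iff_ne_zero.mpr (by simpa [msupp] using hkw)
        calc 1 + u J t ≤ w t + v t := Nat.add_le_add this (hJle t)
          _ = v t + w t := Nat.add_comm _ _
      · simp only [Pi.add_apply, Pi.single_eq_of_ne ht, Nat.zero_add]
        exact (hJle t).trans (Nat.le_add_right _ _)
    have := gIdx_min u (v + w) hv' i hile
    rw [← hJ'] at this
    exact absurd (this.trans_lt hiJ) (by simp [hJ'eq])
  · intro hset
    rcases eq_or_lt_of_le hJ'J with h | h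
    · rw [h]
    · exfalso
      -- v + w = c + u J where c = v + w - u J
      set c : Mon n := fun t => v t + w t - u J t with hc
      have hdecomp : c + u J = v + w := by
        funext t
        simp only [Pi.add_apply, hc]
        have h2 : u J t ≤ v t := hJle t
        omega
        
      have hprev : inPrev u J (c + u J) := ⟨J', h, by rw [hdecomp]; exact hJ'le⟩
      obtain ⟨k, hkset, hkc⟩ := hlq J c hprev
      have hwk : w k = 0 := by
        by_contra hwk
        exact hset k hkset (by simp [msupp, hwk])
      have hck : 1 ≤ c k := Nat.one_le_iff_ne_zero.mpr (by simpa [msupp] using hkc)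
      have hvk : u J k + 1 ≤ v k := by
        have := hJle k
        simp only [hc] at hck
        omega
      obtain ⟨i, hiJ, hiu⟩ := hkset
      have hile : u i ≤ v := by
        refine hiu.trans ?_
        intro t
        rcases eq_or_ne t k with rfl | ht
        · simpa [Nat.add_comm] using hvk
        · simpa [Pi.single_eq_of_ne ht] using hJle t
      exact absurd ((gIdx_min u v hv i hile).trans_lt hiJ) (lt_irrefl J)
end

section
/- Let I be a monomial ideal with linear quotients whose decomposition function g is regular, i.e., set(g(x_s u)) ⊆ set(u) for all u ∈ G(I) and all s ∈ set(u). Then g(x_s g(x_t u)) = g(x_t g(x_s u)) for all u ∈ M(I) and all s, t ∈ set(u). -/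
noncomputable def gmon {n m : ℕ} (u : Fin m → Mon n) (v : Mon n)
    (h : ∃ j, u j ≤ v) : Mon n :=
  u (gIdx u v h)

/-- The decomposition function is regular: `set(g(x_s u_j)) ⊆ set(u_j)` for
every generator `u_j` and every `s ∈ set(u_j)`. -/
def RegularDecomposition {n m : ℕ} (u : Fin m → Mon n) : Prop :=
  ∀ j : Fin m, ∀ s ∈ setU u j,
    setU u (gIdx u (Pi.single s 1 + u j) ⟨j, le_add_self⟩) ⊆ setU u j

section

variable {n m : ℕ} {u : Fin m → Mon n}

lemma single_add_le_of_lt {a b : Mon n} {k : Fin n} (hab : a ≤ b) (hk : a k < b k) :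
    Pi.single k 1 + a ≤ b := by
  intro l
  rcases eq_or_ne l k with rfl | hl
  · simp only [Pi.add_apply, Pi.single_eq_same]
    omega
  · simpa [Pi.single_apply, hl] using hab l

lemma inPrev.mono {j : Fin m} {v w : Mon n} (h : inPrev u j v) (hvw : v ≤ w) : inPrev u j w :=
  h.imp fun _ ⟨hij, hi⟩ => ⟨hij, hi.trans hvw⟩

lemma inPrev_of_mem_setU {j : Fin m} {k : Fin n} {w : Mon n} (hk : k ∈ setU u j)
    (hjw : u j ≤ w) (hkw : u j k < w k) : inPrev u j w :=
  inPrev.mono hk (single_add_le_of_lt hjw hkw)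

lemma HasLinearQuotients.exists_mem_setU (hlq : HasLinearQuotients u) {j : Fin m} {w : Mon n}
    (hjw : u j ≤ w) (hw : inPrev u j w) : ∃ k ∈ setU u j, u j k < w k := by
  obtain ⟨k, hk, hkw⟩ := hlq j (w - u j) (by rwa [tsub_add_cancel_of_le hjw])
  exact ⟨k, hk, Nat.sub_ne_zero_iff_lt.mp (by simpa [msupp] using hkw)⟩

open Classical in
lemma gIdx_spec (v : Mon n) (h : ∃ j, u j ≤ v) : u (gIdx u v h) ≤ v := by
  have hmem : gIdx u v h ∈ Finset.univ.filter fun j => u j ≤ v := Finset.min'_mem _ _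
  simpa using hmem

open Classical in
lemma gIdx_le_of_le {v : Mon n} (h : ∃ j, u j ≤ v) {i : Fin m} (hi : u i ≤ v) :
    gIdx u v h ≤ i :=
  Finset.min'_le _ _ (by simp [hi])

lemma not_inPrev_gIdx (v : Mon n) (h : ∃ j, u j ≤ v) : ¬ inPrev u (gIdx u v h) v :=
  fun ⟨_, hi, hiv⟩ => (gIdx_le_of_le h hiv).not_gt hi

lemma gIdx_eq_of_not_inPrev {v : Mon n} (h : ∃ j, u j ≤ v) {j : Fin m} (hj : u j ≤ v)
    (hprev : ¬ inPrev u j v) : gIdx u v h = j :=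
  (gIdx_le_of_le h hj).antisymm <| not_lt.1 fun hlt => hprev ⟨_, hlt, gIdx_spec v h⟩

lemma gIdx_single_add_of_not_mem_setU (hlq : HasLinearQuotients u) (z : Mon n)
    (hz : ∃ j, u j ≤ z) {s : Fin n} (hs : s ∉ setU u (gIdx u z hz))
    (h : ∃ j, u j ≤ Pi.single s 1 + z) : gIdx u (Pi.single s 1 + z) h = gIdx u z hz := by
  have hgz := gIdx_spec z hz
  refine gIdx_eq_of_not_inPrev h (hgz.trans le_add_self) fun hprev => ?_
  obtain ⟨k, hk, hkz⟩ := hlq.exists_mem_setU (hgz.trans le_add_self) hprev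
  rcases eq_or_ne k s with rfl | hks
  · exact hs hk
  · refine not_inPrev_gIdx z hz (inPrev_of_mem_setU hk hgz ?_)
    simpa [Pi.single_apply, hks] using hkz

lemma gIdx_single_add_of_mem_setU (hlq : HasLinearQuotients u) (hreg : RegularDecomposition u)
    (z : Mon n) (hz : ∃ j, u j ≤ z) {s : Fin n} (hs : s ∈ setU u (gIdx u z hz))
    (h : ∃ j, u j ≤ Pi.single s 1 + z) :
    gIdx u (Pi.single s 1 + z) h =
      gIdx u (Pi.single s 1 + u (gIdx u z hz)) ⟨gIdx u z hz, le_add_self⟩ := by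
  set a := gIdx u z hz
  set d := gIdx u (Pi.single s 1 + u a) ⟨a, le_add_self⟩
  have haz : u a ≤ z := gIdx_spec z hz
  have hda : u d ≤ Pi.single s 1 + u a := gIdx_spec _ _
  have hdz : u d ≤ Pi.single s 1 + z := hda.trans (add_le_add_right haz _)
  refine gIdx_eq_of_not_inPrev h hdz fun hprev => ?_
  obtain ⟨k, hk, hkz⟩ := hlq.exists_mem_setU hdz hprev
  by_cases hka : u d k < (Pi.single s 1 + u a : Mon n) k
  · exact not_inPrev_gIdx _ _ (inPrev_of_mem_setU hk hda hka)
  · refine not_inPrev_gIdx z hz (inPrev_of_mem_setU (hreg a s hs hk) haz ?_)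
    simp only [Pi.add_apply] at hkz hka
    show u a k < z k
    omega

theorem gIdx_single_add_gIdx (hlq : HasLinearQuotients u) (hreg : RegularDecomposition u)
    (z : Mon n) (hz : ∃ j, u j ≤ z) (s : Fin n) :
    gIdx u (Pi.single s 1 + u (gIdx u z hz)) ⟨gIdx u z hz, le_add_self⟩ =
      gIdx u (Pi.single s 1 + z) (hz.imp fun _ hj => hj.trans le_add_self) := by
  by_cases hs : s ∈ setU u (gIdx u z hz)
  · exact (gIdx_single_add_of_mem_setU hlq hreg z hz hs _).symm
  · rw [gIdx_single_add_of_not_mem_setU hlq z hz hs]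
    exact gIdx_eq_of_not_inPrev _ le_add_self hs

end

theorem stmt4_general {n m : ℕ} (u : Fin m → Mon n)
    (hlq : HasLinearQuotients u)
    (hreg : RegularDecomposition u)
    (v : Mon n) (hv : ∃ j, u j ≤ v) (s t : Fin n) :
    -- `g(x_s g(x_t v)) = g(x_t g(x_s v))`
    gmon u (Pi.single s 1 + gmon u (Pi.single t 1 + v)
        (hv.imp fun _ hj => hj.trans le_add_self))
        ⟨gIdx u (Pi.single t 1 + v) (hv.imp fun _ hj => hj.trans le_add_self),
          le_add_self⟩ =
      gmon u (Pi.single t 1 + gmon u (Pi.single s 1 + v)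
        (hv.imp fun _ hj => hj.trans le_add_self))
        ⟨gIdx u (Pi.single s 1 + v) (hv.imp fun _ hj => hj.trans le_add_self),
          le_add_self⟩ := by
  unfold gmon
  rw [gIdx_single_add_gIdx hlq hreg, gIdx_single_add_gIdx hlq hreg]
  simp only [add_left_comm (Pi.single s 1 : Mon n)]

theorem stmt4 {n m : ℕ} (u : Fin m → Mon n)
    (hmin : ∀ i j : Fin m, u i ≤ u j → i = j)
    (hlq : HasLinearQuotients u)
    (hreg : RegularDecomposition u)
    (v : Mon n) (hv : ∃ j, u j ≤ v) (s t : Fin n)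
    (hs : s ∈ setU u (gIdx u v hv)) (ht : t ∈ setU u (gIdx u v hv)) :
    -- `g(x_s g(x_t v)) = g(x_t g(x_s v))`
    gmon u (Pi.single s 1 + gmon u (Pi.single t 1 + v)
        (hv.imp fun _ hj => hj.trans le_add_self))
        ⟨gIdx u (Pi.single t 1 + v) (hv.imp fun _ hj => hj.trans le_add_self),
          le_add_self⟩ =
      gmon u (Pi.single t 1 + gmon u (Pi.single s 1 + v)
        (hv.imp fun _ hj => hj.trans le_add_self))
        ⟨gIdx u (Pi.single s 1 + v) (hv.imp fun _ hj => hj.trans le_add_self),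
          le_add_self⟩ :=
  stmt4_general u hlq hreg v hv s t
end

section
/- Let Δ be a simplicial complex on [n] whose Stanley-Reisner ideal I_Δ is matroidal (the supports of the minimal generators form the bases of a matroid). Then the decomposition function g of I_Δ, taken with respect to the reverse lexicographic order on the generators, is regular: set(g(x_i u)) ⊆ set(u) for every u ∈ G(I_Δ) and every i ∈ set(u). -/
/-- `RevDegLexGT a b` : `a` is greater than `b` in the reverse degree
lexicographic order. -/
def RevDegLexGT {n : ℕ} (a b : Mon n) : Prop :=
  mdeg b < mdeg a ∨ (mdeg a = mdeg b ∧ RevLexGT a b)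

/-- For `u ∈ G` ordered decreasingly by the given order `gt`,
`set(u) = {k : x_k ∈ (ideal generated by the generators greater than u) : u}`. -/
def setG {n : ℕ} (gt : Mon n → Mon n → Prop) (G : Finset (Mon n)) (u : Mon n) :
    Set (Fin n) :=
  {k | ∃ v ∈ G, gt v u ∧ v ≤ Pi.single k 1 + u}

/-- The generators `G`, ordered decreasingly by `gt`, have linear quotients:
for each `u ∈ G` the colon ideal of the previous generators with `u` is
generated by the variables it contains, i.e. every monomial `w` in the colon
ideal is divisible by some variable of the colon ideal. -/
def HasLinearQuotientsG {n : ℕ} (gt : Mon n → Mon n → Prop) (G : Finset (Mon n)) : Prop :=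
  ∀ u ∈ G, ∀ w : Mon n, (∃ v ∈ G, gt v u ∧ v ≤ w + u) →
    ∃ k ∈ setG gt G u, k ∈ msupp w
namespace Stmt7Aux

lemma revlex_irrefl {n : ℕ} (a : Mon n) : ¬ RevLexGT a a := by
  rintro ⟨i, h, -⟩; omega

lemma revlex_trans {n : ℕ} {a b c : Mon n} (h1 : RevLexGT a b) (h2 : RevLexGT b c) :
    RevLexGT a c := by
  obtain ⟨i, hi, hia⟩ := h1; obtain ⟨j, hj, hja⟩ := h2
  rcases lt_trichotomy i j with h | h | h
  · exact ⟨j, by rw [hia j h]; exact hj, fun k hk => (hia k (h.trans hk)).trans (hja k hk)⟩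
  · subst h; exact ⟨i, hi.trans hj, fun k hk => (hia k hk).trans (hja k hk)⟩
  · exact ⟨i, by rw [hja i h] at hi; exact hi, fun k hk => (hia k hk).trans (hja k (h.trans hk))⟩

lemma eq_of_le_of_mdeg {n : ℕ} {a b : Mon n} (h : a ≤ b) (hd : mdeg a = mdeg b) : a = b := by
  funext j
  exact (Finset.sum_eq_sum_iff_of_le (fun i _ => h i)).mp hd j (Finset.mem_univ j)

lemma exch_of_le {n : ℕ} {u v : Mon n} {k : Fin n}
    (hu : ∀ i, u i ≤ 1) (hv : ∀ i, v i ≤ 1)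
    (hle : v ≤ Pi.single k 1 + u) (hd : mdeg v = mdeg u) (hne : v ≠ u) :
    ∃ t : Fin n, (t : ℕ) ≠ (k : ℕ) ∧ u k = 0 ∧ v k = 1 ∧ u t = 1 ∧ v t = 0 ∧
      ∀ j : Fin n, (j : ℕ) ≠ (k : ℕ) → (j : ℕ) ≠ (t : ℕ) → v j = u j := by
  have hle' : ∀ j, v j ≤ (if j = k then 1 else 0) + u j := by
    intro j; simpa [Pi.single_apply] using hle j
  have hk1 : v k ≤ u k ∨ (v k = 1 ∧ u k = 0) := by
    have h1 := hu k; have h2 := hv k; have h3 := hle' k; simp at h3; omega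
  rcases hk1 with hk1 | ⟨hvk, huk⟩
  · exact absurd (eq_of_le_of_mdeg (fun j => by
      by_cases hj : j = k
      · subst hj; exact hk1
      · simpa [hj] using hle' j) hd) hne
  have hd' : (∑ j, v j) = ∑ j, u j := hd
  have h1 : (∑ j ∈ Finset.univ.erase k, v j) + v k = ∑ j, v j :=
    Finset.sum_erase_add _ _ (Finset.mem_univ k)
  have h2 : (∑ j ∈ Finset.univ.erase k, u j) + u k = ∑ j, u j :=
    Finset.sum_erase_add _ _ (Finset.mem_univ k)
  have hsum : (∑ j ∈ Finset.univ.erase k, u j) = (∑ j ∈ Finset.univ.erase k, v j) + 1 := by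
    omega
  have hvu : ∀ j ∈ Finset.univ.erase k, v j ≤ u j := by
    intro j hj
    have hjk := Finset.ne_of_mem_erase hj
    simpa [hjk] using hle' j
  have hex : ∃ t ∈ Finset.univ.erase k, v t < u t := by
    by_contra hc
    push_neg at hc
    have := Finset.sum_le_sum hc
    omega
  obtain ⟨t, htmem, htlt⟩ := hex
  have htk : t ≠ k := Finset.ne_of_mem_erase htmem
  have hut : u t = 1 := le_antisymm (hu t) (by omega)
  have hvt : v t = 0 := by omega
  refine ⟨t, fun h => htk (Fin.ext h), huk, hvk, hut, hvt, ?_⟩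
  intro j hjk hjt
  have hjk' : j ≠ k := fun h => hjk (by rw [h])
  have hjt' : j ≠ t := fun h => hjt (by rw [h])
  have h3 : (∑ x ∈ (Finset.univ.erase k).erase t, v x) + v t = ∑ x ∈ Finset.univ.erase k, v x :=
    Finset.sum_erase_add _ _ htmem
  have h4 : (∑ x ∈ (Finset.univ.erase k).erase t, u x) + u t = ∑ x ∈ Finset.univ.erase k, u x :=
    Finset.sum_erase_add _ _ htmem
  have h5 : (∑ x ∈ (Finset.univ.erase k).erase t, v x) = ∑ x ∈ (Finset.univ.erase k).erase t, u x := by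
    omega
  exact (Finset.sum_eq_sum_iff_of_le
    (fun x hx => hvu x (Finset.mem_of_mem_erase hx))).mp h5 j
    (Finset.mem_erase.mpr ⟨hjt', Finset.mem_erase.mpr ⟨hjk', Finset.mem_univ j⟩⟩)

lemma exch_eq {n : ℕ} {u v : Mon n} {k t : Fin n} (htk : (t : ℕ) ≠ (k : ℕ))
    (huk : u k = 0) (hvk : v k = 1) (hut : u t = 1) (hvt : v t = 0)
    (heq : ∀ j : Fin n, (j : ℕ) ≠ (k : ℕ) → (j : ℕ) ≠ (t : ℕ) → v j = u j) :
    ∀ m : Fin n, v m + (if (m : ℕ) = (t : ℕ) then 1 else 0)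
      = (if (m : ℕ) = (k : ℕ) then 1 else 0) + u m := by
  intro m
  rcases eq_or_ne (m : ℕ) (k : ℕ) with h1 | h1
  · have hm : m = k := Fin.ext h1
    subst hm
    rw [if_neg (show ¬(m : ℕ) = (t : ℕ) by omega), if_pos rfl]
    omega
  · rcases eq_or_ne (m : ℕ) (t : ℕ) with h2 | h2
    · have hm : m = t := Fin.ext h2
      subst hm
      rw [if_pos rfl, if_neg h1]
      omega
    · rw [if_neg h2, if_neg h1, heq m h1 h2]; omega

lemma revlex_of_exch {n : ℕ} {u v : Mon n} {k t : Fin n} (hkt : (k : ℕ) < (t : ℕ))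
    (hvk : v k = 1) (huk : u k = 0) (hvt : v t = 0) (hut : u t = 1)
    (heq : ∀ j : Fin n, (j : ℕ) ≠ (k : ℕ) → (j : ℕ) ≠ (t : ℕ) → v j = u j) :
    RevLexGT v u := by
  refine ⟨t, by omega, fun j hj => ?_⟩
  have hj' : (t : ℕ) < (j : ℕ) := Fin.lt_def.mp hj
  exact heq j (by omega) (by omega)

lemma lt_of_revlex_exch {n : ℕ} {u v : Mon n} {k t : Fin n} (htk : (t : ℕ) ≠ (k : ℕ))
    (hvk : v k = 1) (huk : u k = 0) (hvt : v t = 0) (hut : u t = 1)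
    (heq : ∀ j : Fin n, (j : ℕ) ≠ (k : ℕ) → (j : ℕ) ≠ (t : ℕ) → v j = u j)
    (h : RevLexGT v u) : (k : ℕ) < (t : ℕ) := by
  obtain ⟨m, hm, hall⟩ := h
  have hmt : (m : ℕ) = (t : ℕ) := by
    by_contra hmt
    rcases eq_or_ne (m : ℕ) (k : ℕ) with h1 | h1
    · have : m = k := Fin.ext h1; subst this; omega
    · have := heq m h1 hmt; omega
  have hmt' : m = t := Fin.ext hmt
  subst hmt'
  rcases lt_or_ge (k : ℕ) (m : ℕ) with h1 | h1
  · exact h1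
  · have hkm : m < k := by rw [Fin.lt_def]; omega
    have := hall k hkm; omega

end Stmt7Aux

open Stmt7Aux

theorem stmt7 {n : ℕ} (G : Finset (Mon n))
    -- squarefree
    (hsq : ∀ a ∈ G, ∀ i, a i ≤ 1)
    -- all generators have the same degree (the bases of a matroid are
    -- equicardinal)
    (hdeg : ∀ a ∈ G, ∀ b ∈ G, mdeg a = mdeg b)
    -- `G` is a minimal system of monomial generators
    (hmin : ∀ a ∈ G, ∀ b ∈ G, a ≤ b → a = b)
    -- matroid exchange property: for all `u, v ∈ G` and `i ∈ supp u \ supp v`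
    -- there is `j ∈ supp v \ supp u` with `x_j (u / x_i)` in the ideal
    (hmatroid : ∀ u ∈ G, ∀ v ∈ G, ∀ i ∈ msupp u, i ∉ msupp v →
      ∃ j ∈ msupp v, j ∉ msupp u ∧
        ∃ w ∈ G, w ≤ u - Pi.single i 1 + Pi.single j 1) :
    -- conclusion: whenever `gi ∈ G` is the decomposition `g(x_i u)`, i.e. the
    -- reverse-lexicographically greatest generator dividing `x_i u`, one has
    -- `set(gi) ⊆ set(u)`
    ∀ u ∈ G, ∀ i ∈ setG RevLexGT G u, ∀ gi ∈ G,
      gi ≤ Pi.single i 1 + u →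
      (∀ v ∈ G, v ≤ Pi.single i 1 + u → v = gi ∨ RevLexGT gi v) →
      setG RevLexGT G gi ⊆ setG RevLexGT G u := by
  intro u huG i hi gi hgiG hgile hmax s hs
  simp only [setG, Set.mem_setOf_eq] at hi hs ⊢
  obtain ⟨v, hvG, hvgt, hvle⟩ := hi
  obtain ⟨w, hwG, hwgt, hwle⟩ := hs
  have hgiu : RevLexGT gi u := by
    rcases hmax v hvG hvle with h | h
    · rw [← h]; exact hvgt
    · exact revlex_trans h hvgt
  have hgi_ne_u : gi ≠ u := by rintro rfl; exact revlex_irrefl _ hgiu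
  have hw_ne_gi : w ≠ gi := by rintro rfl; exact revlex_irrefl _ hwgt
  obtain ⟨t, hti, hui, hgii, hut, hgit, hgieq⟩ :=
    exch_of_le (hsq u huG) (hsq gi hgiG) hgile (hdeg gi hgiG u huG) hgi_ne_u
  obtain ⟨r, hrs, hgis, hws, hgir, hwr, hweq⟩ :=
    exch_of_le (hsq gi hgiG) (hsq w hwG) hwle (hdeg w hwG gi hgiG) hw_ne_gi
  have hit : (i : ℕ) < (t : ℕ) := lt_of_revlex_exch hti hgii hui hgit hut hgieq hgiu
  have hsr : (s : ℕ) < (r : ℕ) := lt_of_revlex_exch hrs hws hgis hwr hgir hweq hwgt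
  have hgi_u := exch_eq hti hui hgii hut hgit hgieq
  have hw_gi := exch_eq hrs hgis hws hgir hwr hweq
  have hsi : (s : ℕ) ≠ (i : ℕ) := by
    intro h; have : s = i := Fin.ext h; rw [this] at hgis; omega
  have hrt : (r : ℕ) ≠ (t : ℕ) := by
    intro h; have : r = t := Fin.ext h; rw [this] at hgir; omega
  by_cases hst : (s : ℕ) = (t : ℕ)
  · -- s = t : contradiction with maximality of gi
    exfalso
    have hwle2 : w ≤ Pi.single i 1 + u := by
      refine Pi.le_def.mpr fun m => ?_
      have h1 := hgi_u m; have h2 := hw_gi m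
      have h3 := hsq w hwG m; have h4 := hsq u huG m
      simp only [Pi.add_apply, Pi.single_apply, Fin.ext_iff]
      split_ifs at h1 h2 ⊢ <;> omega
    rcases hmax w hwG hwle2 with h | h
    · exact revlex_irrefl _ (h ▸ hwgt)
    · exact revlex_irrefl _ (revlex_trans h hwgt)
  have hus : u s = 0 := by have := hgieq s hsi hst; omega
  have hwt : w t = 0 := by have := hweq t (by omega) (by omega); omega
  by_cases hri : (r : ℕ) = (i : ℕ)
  · -- r = i : w itself works, w = x_s u / x_t with s < t
    have hwu : ∀ j : Fin n, (j : ℕ) ≠ (s : ℕ) → (j : ℕ) ≠ (t : ℕ) → w j = u j := by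
      intro j h1 h2
      have e1 := hgi_u j; have e2 := hw_gi j
      split_ifs at e1 e2 <;> omega
    have hwles : w ≤ Pi.single s 1 + u := by
      refine Pi.le_def.mpr fun m => ?_
      have h1 := hgi_u m; have h2 := hw_gi m
      have h3 := hsq w hwG m; have h4 := hsq u huG m
      simp only [Pi.add_apply, Pi.single_apply, Fin.ext_iff]
      split_ifs at h1 h2 ⊢ <;> omega
    exact ⟨w, hwG, revlex_of_exch (by omega) hws hus hwt hut hwu, hwles⟩
  · -- r ≠ i
    have hur : u r = 1 := by have := hgieq r hri hrt; omega
    have hwi : w i = 1 := by have := hweq i (by omega) (by omega); omega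
    obtain ⟨j, hjmem, hjnmem, w', hw'G, hw'le⟩ :=
      hmatroid w hwG u huG i (by simp [msupp, hwi]) (by simp [msupp, hui])
    simp only [msupp, Finset.mem_filter, Finset.mem_univ, true_and, not_not] at hjmem hjnmem
    have hjtr : (j : ℕ) = (t : ℕ) ∨ (j : ℕ) = (r : ℕ) := by
      by_contra hc
      push_neg at hc
      obtain ⟨hc1, hc2⟩ := hc
      have h1 := hgi_u j; have h2 := hw_gi j
      split_ifs at h1 h2 <;> omega
    have hw'le' : ∀ m : Fin n, w' m ≤ w m - (if (m : ℕ) = (i : ℕ) then 1 else 0)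
        + (if (m : ℕ) = (j : ℕ) then 1 else 0) := by
      intro m
      have := hw'le m
      simpa only [Pi.add_apply, Pi.sub_apply, Pi.single_apply, Fin.ext_iff] using this
    rcases hjtr with hjt | hjr
    · -- j = t : w' = x_s u / x_r works
      have hw'les : w' ≤ Pi.single s 1 + u := by
        refine Pi.le_def.mpr fun m => ?_
        have h1 := hgi_u m; have h2 := hw_gi m; have h5 := hw'le' m
        have h3 := hsq w hwG m; have h4 := hsq u huG m; have h6 := hsq gi hgiG m
        simp only [Pi.add_apply, Pi.single_apply, Fin.ext_iff]
        split_ifs at h1 h2 h5 ⊢ <;> omega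
      have hw'r : w' r = 0 := by
        have h5 := hw'le' r
        split_ifs at h5 <;> omega
      have hw'ne : w' ≠ u := by intro h; rw [h] at hw'r; omega
      obtain ⟨t', ht's, hus', hw's, hut', hw't', hw'eq⟩ :=
        exch_of_le (hsq u huG) (hsq w' hw'G) hw'les (hdeg w' hw'G u huG) hw'ne
      have ht'r : t' = r := by
        refine Fin.ext ?_
        by_contra hc
        have := hw'eq r (by omega) (by omega)
        omega
      subst ht'r
      exact ⟨w', hw'G, revlex_of_exch (by omega) hw's hus hw't' hut' hw'eq, hw'les⟩
    · -- j = r : w' = x_s u / x_t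
      have hw'les : w' ≤ Pi.single s 1 + u := by
        refine Pi.le_def.mpr fun m => ?_
        have h1 := hgi_u m; have h2 := hw_gi m; have h5 := hw'le' m
        have h3 := hsq w hwG m; have h4 := hsq u huG m; have h6 := hsq gi hgiG m
        simp only [Pi.add_apply, Pi.single_apply, Fin.ext_iff]
        split_ifs at h1 h2 h5 ⊢ <;> omega
      have hw't : w' t = 0 := by
        have h5 := hw'le' t
        split_ifs at h5 <;> omega
      have hw'ne : w' ≠ u := by intro h; rw [h] at hw't; omega
      obtain ⟨t', ht's, hus', hw's, hut', hw't', hw'eq⟩ :=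
        exch_of_le (hsq u huG) (hsq w' hw'G) hw'les (hdeg w' hw'G u huG) hw'ne
      have ht't : t' = t := by
        refine Fin.ext ?_
        by_contra hc
        have := hw'eq t (by omega) (by omega)
        omega
      subst ht't
      by_cases hst2 : (s : ℕ) < (t' : ℕ)
      · exact ⟨w', hw'G, revlex_of_exch hst2 hw's hus hw't' hut' hw'eq, hw'les⟩
      · -- t < s : second exchange at r
        obtain ⟨j₂, hj₂m, hj₂n, w₂, hw₂G, hw₂le⟩ :=
          hmatroid u huG w hwG r (by simp [msupp, hur]) (by simp [msupp, hwr])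
        simp only [msupp, Finset.mem_filter, Finset.mem_univ, true_and, not_not] at hj₂m hj₂n
        have hj₂ : (j₂ : ℕ) = (s : ℕ) ∨ (j₂ : ℕ) = (i : ℕ) := by
          by_contra hc
          push_neg at hc
          obtain ⟨hc1, hc2⟩ := hc
          have h1 := hgi_u j₂; have h2 := hw_gi j₂
          have h8 := hsq gi hgiG j₂
          split_ifs at h1 h2 <;> omega
        have hw₂le' : ∀ m : Fin n, w₂ m ≤ u m - (if (m : ℕ) = (r : ℕ) then 1 else 0)
            + (if (m : ℕ) = (j₂ : ℕ) then 1 else 0) := by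
          intro m
          have := hw₂le m
          simpa only [Pi.add_apply, Pi.sub_apply, Pi.single_apply, Fin.ext_iff] using this
        rcases hj₂ with hj₂s | hj₂i
        · -- j₂ = s : w₂ = x_s u / x_r works
          have hw₂les : w₂ ≤ Pi.single s 1 + u := by
            refine Pi.le_def.mpr fun m => ?_
            have h5 := hw₂le' m
            simp only [Pi.add_apply, Pi.single_apply, Fin.ext_iff]
            split_ifs at h5 ⊢ <;> omega
          have hw₂r : w₂ r = 0 := by
            have h5 := hw₂le' r
            split_ifs at h5 <;> omega
          have hw₂ne : w₂ ≠ u := by intro h; rw [h] at hw₂r; omega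
          obtain ⟨t₂, ht₂s, hus₂, hw₂s, hut₂, hw₂t₂, hw₂eq⟩ :=
            exch_of_le (hsq u huG) (hsq w₂ hw₂G) hw₂les (hdeg w₂ hw₂G u huG) hw₂ne
          have ht₂r : t₂ = r := by
            refine Fin.ext ?_
            by_contra hc
            have := hw₂eq r (by omega) (by omega)
            omega
          subst ht₂r
          exact ⟨w₂, hw₂G, revlex_of_exch (by omega) hw₂s hus hw₂t₂ hut₂ hw₂eq, hw₂les⟩
        · -- j₂ = i : contradiction with maximality of gi
          exfalso
          have hw₂lei : w₂ ≤ Pi.single i 1 + u := by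
            refine Pi.le_def.mpr fun m => ?_
            have h5 := hw₂le' m
            simp only [Pi.add_apply, Pi.single_apply, Fin.ext_iff]
            split_ifs at h5 ⊢ <;> omega
          have hw₂r : w₂ r = 0 := by
            have h5 := hw₂le' r
            split_ifs at h5 <;> omega
          have hw₂ne : w₂ ≠ u := by intro h; rw [h] at hw₂r; omega
          obtain ⟨t₂, ht₂i, hui₂, hw₂i, hut₂, hw₂t₂, hw₂eq⟩ :=
            exch_of_le (hsq u huG) (hsq w₂ hw₂G) hw₂lei (hdeg w₂ hw₂G u huG) hw₂ne
          have ht₂r : t₂ = r := by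
            refine Fin.ext ?_
            by_contra hc
            have := hw₂eq r (by omega) (by omega)
            omega
          subst ht₂r
          have hw₂t : w₂ t' = 1 := by
            have := hw₂eq t' (by omega) (by omega); omega
          rcases hmax w₂ hw₂G hw₂lei with h | h
          · have := congrFun h t'
            rw [hw₂t, hgit] at this
            omega
          · obtain ⟨m, hm, hall⟩ := h
            have hmt : (m : ℕ) = (t' : ℕ) := by
              by_contra hc
              rcases eq_or_ne (m : ℕ) (i : ℕ) with h1 | h1
              · have hm' : m = i := Fin.ext h1; rw [hm'] at hm
                rw [hgii, hw₂i] at hm; omega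
              · rcases eq_or_ne (m : ℕ) (t₂ : ℕ) with h2 | h2
                · have hm' : m = t₂ := Fin.ext h2; rw [hm'] at hm
                  rw [hgir, hw₂t₂] at hm; omega
                · have e1 := hgieq m h1 hc
                  have e2 := hw₂eq m h1 h2
                  omega
            have hrlt : (t₂ : ℕ) < (t' : ℕ) := by
              by_contra hc
              have hmr : m < t₂ := by rw [Fin.lt_def]; omega
              have := hall t₂ hmr
              rw [hgir, hw₂t₂] at this
              omega
            omega
end

section
/- Let I be a matroidal Stanley-Reisner ideal with generators ordered reverse lexicographically. Then for each generator u, set(u) = {i : supp(v) \ supp(u) = {i} for some v ∈ G(I) with v > u}. -/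
theorem stmt8 {n : ℕ} (G : Finset (Mon n))
    -- squarefree
    (hsq : ∀ a ∈ G, ∀ i, a i ≤ 1)
    -- all generators have the same degree
    (hdeg : ∀ a ∈ G, ∀ b ∈ G, mdeg a = mdeg b)
    -- `G` is a minimal system of monomial generators
    (hmin : ∀ a ∈ G, ∀ b ∈ G, a ≤ b → a = b)
    -- matroid exchange property
    (hmatroid : ∀ u ∈ G, ∀ v ∈ G, ∀ i ∈ msupp u, i ∉ msupp v →
      ∃ j ∈ msupp v, j ∉ msupp u ∧
        ∃ w ∈ G, w ≤ u - Pi.single i 1 + Pi.single j 1) :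
    ∀ u ∈ G,
      setG RevLexGT G u =
        {i | ∃ v ∈ G, RevLexGT v u ∧ msupp v \ msupp u = {i}} := by
  intro u hu
  ext i
  simp only [setG, Set.mem_setOf_eq]
  constructor
  · rintro ⟨v, hv, hgt, hle⟩
    refine ⟨v, hv, hgt, ?_⟩
    have hne : v ≠ u := by
      rintro rfl
      obtain ⟨j, hj, -⟩ := hgt
      exact lt_irrefl _ hj
    have hvu : ¬ v ≤ u := fun h => hne (hmin v hv u hu h)
    -- u i = 0
    have hui : u i = 0 := by
      by_contra h
      apply hvu
      intro j
      by_cases hji : j = i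
      · subst hji
        exact le_trans (hsq v hv j) (Nat.one_le_iff_ne_zero.mpr h)
      · have := hle j
        simpa [Pi.single_apply, hji] using this
    have hvi : v i ≠ 0 := by
      intro h0
      apply hvu
      intro j
      by_cases hji : j = i
      · subst hji; simp [h0]
      · have := hle j
        simpa [Pi.single_apply, hji] using this
    ext j
    simp only [Finset.mem_sdiff, Finset.mem_singleton, msupp, Finset.mem_filter,
      Finset.mem_univ, true_and]
    constructor
    · rintro ⟨hvj, huj⟩
      by_contra hji
      have := hle j
      simp only [Pi.add_apply, Pi.single_apply, if_neg hji, zero_add] at this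
      push_neg at huj
      omega
    · rintro rfl
      exact ⟨hvi, by simp [hui]⟩
  · rintro ⟨v, hv, hgt, hdiff⟩
    refine ⟨v, hv, hgt, fun j => ?_⟩
    by_cases hvj : v j = 0
    · simp [hvj]
    by_cases huj : u j = 0
    · have hj : j = i := by
        have : j ∈ msupp v \ msupp u := by
          simp [msupp, Finset.mem_sdiff, hvj, huj]
        rw [hdiff] at this
        simpa using this
      subst hj
      simp only [Pi.add_apply, Pi.single_apply, if_pos rfl, eq_self_iff_true, if_true]
      have := hsq v hv j
      omega
    · have := hsq v hv j
      have h1 : 1 ≤ u j := Nat.one_le_iff_ne_zero.mpr huj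
      simp only [Pi.add_apply]
      omega
end

section
/- Let J = (f_1,...,f_n), L = J : f_{n+1} in a commutative ring R, let A and M be DG algebra resolutions of R/J and R/L respectively, and let φ: A → M be a DG algebra homomorphism lifting the surjection R/J → R/L. Define the A-action on M by a·m = φ(a)m. If ψ: M → A is a complex homomorphism with φ∘ψ = f_{n+1}·id_M, and either (i) f_{n+1} is a non-zerodivisor of R and the image of ψ is an ideal of A, or (ii) φ is injective, then ψ is a DG A-module homomorphism, i.e., ψ(φ(a)m) = aψ(m) for all a ∈ A, m ∈ M. -/
/-! Applying `φ` to both sides: `φ (a * ψ m) = φ a * φ (ψ m) = f_{n+1} • (φ a * m)` and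
`φ (ψ (φ a * m)) = f_{n+1} • (φ a * m)`, so the two sides agree after `φ`. In case (ii) this
suffices. In case (i) write `a * ψ m = ψ y`; then `f_{n+1} • (φ a * m) = f_{n+1} • y`, and a
nonzerodivisor acts injectively on the free (hence flat) module `M`, so `φ a * m = y`. -/

open Int (negOnePow)

variable (R : Type*) [CommRing R]

/-- A (graded-commutative, non-negatively graded) DG algebra structure on an
`R`-module `A`. -/
structure DGAlgebra (A : Type*) [AddCommGroup A] [Module R A] where
  /-- the grading -/
  gr : ℤ → Submodule R A
  /-- the multiplication -/
  mul : A →ₗ[R] A →ₗ[R] A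
  /-- the unit -/
  one : A
  /-- the differential -/
  d : A →ₗ[R] A
  gr_neg : ∀ i < 0, gr i = ⊥
  gr_internal : DirectSum.IsInternal gr
  mul_mem : ∀ i j a b, a ∈ gr i → b ∈ gr j → mul a b ∈ gr (i + j)
  one_mem : one ∈ gr 0
  one_mul : ∀ a, mul one a = a
  mul_one : ∀ a, mul a one = a
  mul_assoc : ∀ a b c, mul (mul a b) c = mul a (mul b c)
  mul_comm : ∀ i j a b, a ∈ gr i → b ∈ gr j →
    mul a b = (negOnePow (i * j) : ℤ) • mul b a
  d_mem : ∀ i a, a ∈ gr i → d a ∈ gr (i - 1)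
  d_sq : ∀ a, d (d a) = 0
  leibniz : ∀ i a b, a ∈ gr i →
    d (mul a b) = mul (d a) b + (negOnePow i : ℤ) • mul a (d b)

/-- A DG algebra resolution of `R/I`: a DG algebra which is a free resolution
of `R/I`, via an augmentation `aug : A → R/I`. -/
structure DGAlgebraResolution (A : Type*) [AddCommGroup A] [Module R A]
    (I : Ideal R) extends DGAlgebra R A where
  free : Module.Free R A
  /-- the augmentation -/
  aug : A →ₗ[R] R ⧸ I
  aug_one : aug one = 1
  aug_mul : ∀ a b, aug (mul a b) = aug a * aug b
  aug_zero : ∀ i, i ≠ 0 → ∀ a ∈ gr i, aug a = 0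
  aug_surj : Function.Surjective aug
  aug_d : ∀ a, aug (d a) = 0
  exact_zero : ∀ a ∈ gr 0, aug a = 0 → ∃ b ∈ gr 1, d b = a
  exact_pos : ∀ i : ℤ, 1 ≤ i → ∀ a ∈ gr i, d a = 0 → ∃ b ∈ gr (i + 1), d b = a

variable {R}

section

variable {A M : Type*} [AddCommGroup A] [Module R A] [AddCommGroup M] [Module R M]
  {mulA : A →ₗ[R] A →ₗ[R] A} {mulM : M →ₗ[R] M →ₗ[R] M} {φ : A →ₗ[R] M} {ψ : M →ₗ[R] A} {r : R}

theorem map_mul_apply_eq_smul (hφ_mul : ∀ a b, φ (mulA a b) = mulM (φ a) (φ b))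
    (hcomp : ∀ x, φ (ψ x) = r • x) (a : A) (x : M) :
    φ (mulA a (ψ x)) = r • mulM (φ a) x := by
  rw [hφ_mul, hcomp, map_smul]

theorem map_mul_apply_of_injective (hφ_mul : ∀ a b, φ (mulA a b) = mulM (φ a) (φ b))
    (hcomp : ∀ x, φ (ψ x) = r • x) (hφ : Function.Injective φ) (a : A) (x : M) :
    ψ (mulM (φ a) x) = mulA a (ψ x) :=
  hφ <| by rw [hcomp, map_mul_apply_eq_smul hφ_mul hcomp]

theorem map_mul_apply_of_isSMulRegular (hφ_mul : ∀ a b, φ (mulA a b) = mulM (φ a) (φ b))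
    (hcomp : ∀ x, φ (ψ x) = r • x) (hr : IsSMulRegular M r)
    (hψ : ∀ a x, mulA a (ψ x) ∈ LinearMap.range ψ) (a : A) (x : M) :
    ψ (mulM (φ a) x) = mulA a (ψ x) := by
  obtain ⟨y, hy⟩ := hψ a x
  have hmul : mulM (φ a) x = y :=
    hr <| by simp only [← map_mul_apply_eq_smul hφ_mul hcomp, ← hy, hcomp]
  rw [hmul, hy]

end

theorem stmt12_general {R : Type*} [CommRing R] (fn1 : R)
    {J L : Ideal R}
    {A : Type*} [AddCommGroup A] [Module R A]
    {M : Type*} [AddCommGroup M] [Module R M]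
    (𝒜 : DGAlgebraResolution R A J) (ℳ : DGAlgebraResolution R M L)
    -- `φ` is a DG algebra homomorphism lifting `R/J → R/L`
    (φ : A →ₗ[R] M)
    (hφ_mul : ∀ a b, φ (𝒜.mul a b) = ℳ.mul (φ a) (φ b))
    -- `ψ` is a complex homomorphism with `φ ∘ ψ = f_{n+1}·id_M`
    (ψ : M →ₗ[R] A)
    (hcomp : ∀ x, φ (ψ x) = fn1 • x)
    -- case (i) or case (ii)
    (hcase :
      ((∀ r : R, fn1 * r = 0 → r = 0) ∧
        ∀ a x, 𝒜.mul a (ψ x) ∈ LinearMap.range ψ) ∨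
      Function.Injective φ) :
    -- conclusion: `ψ` is a DG `A`-module homomorphism, `ψ(φ(a)m) = aψ(m)`
    ∀ a x, ψ (ℳ.mul (φ a) x) = 𝒜.mul a (ψ x) := by
  rcases hcase with ⟨hreg, hideal⟩ | hinj
  · have : Module.Free R M := ℳ.free
    have hfn1 : IsSMulRegular M fn1 :=
      Module.Flat.isSMulRegular_of_nonZeroDivisors (mem_nonZeroDivisors_iff_left.mpr hreg)
    exact map_mul_apply_of_isSMulRegular hφ_mul hcomp hfn1 hideal
  · exact map_mul_apply_of_injective hφ_mul hcomp hinj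

theorem stmt12 {R : Type*} [CommRing R] {n : ℕ} (f : Fin n → R) (fn1 : R)
    {J L : Ideal R}
    (hJ : J = Ideal.span (Set.range f)) (hL : L = J.colon (Ideal.span {fn1}))
    (hJL : J ≤ L)
    {A : Type*} [AddCommGroup A] [Module R A]
    {M : Type*} [AddCommGroup M] [Module R M]
    (𝒜 : DGAlgebraResolution R A J) (ℳ : DGAlgebraResolution R M L)
    -- `φ` is a DG algebra homomorphism lifting `R/J → R/L`
    (φ : A →ₗ[R] M)
    (hφ_one : φ 𝒜.one = ℳ.one)
    (hφ_mul : ∀ a b, φ (𝒜.mul a b) = ℳ.mul (φ a) (φ b))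
    (hφ_mem : ∀ i a, a ∈ 𝒜.gr i → φ a ∈ ℳ.gr i)
    (hφ_chain : ∀ a, φ (𝒜.d a) = ℳ.d (φ a))
    (hφ_lift : ∀ a, ℳ.aug (φ a) = Ideal.Quotient.factor hJL (𝒜.aug a))
    -- `ψ` is a complex homomorphism with `φ ∘ ψ = f_{n+1}·id_M`
    (ψ : M →ₗ[R] A)
    (hψ_mem : ∀ i x, x ∈ ℳ.gr i → ψ x ∈ 𝒜.gr i)
    (hψ_chain : ∀ x, ψ (ℳ.d x) = 𝒜.d (ψ x))
    (hcomp : ∀ x, φ (ψ x) = fn1 • x)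
    -- case (i) or case (ii)
    (hcase :
      ((∀ r : R, fn1 * r = 0 → r = 0) ∧
        ∀ a x, 𝒜.mul a (ψ x) ∈ LinearMap.range ψ) ∨
      Function.Injective φ) :
    -- conclusion: `ψ` is a DG `A`-module homomorphism, `ψ(φ(a)m) = aψ(m)`
    ∀ a x, ψ (ℳ.mul (φ a) x) = 𝒜.mul a (ψ x) :=
  stmt12_general fn1 𝒜 ℳ φ hφ_mul ψ hcomp hcase
end

section
/- Let I ⊆ R = K[x_1,...,x_n] be a squarefree monomial ideal and Δ the simplicial complex with I = I_Δ. Then I_Δ has linear quotients (with respect to some order of its minimal generators) if and only if the Alexander dual complex Δ* is shellable in the nonpure sense of Björner–Wachs. -/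
/-! Complementation `σ ↦ [n] \ σ` maps the facets of `Δ*` bijectively onto the minimal nonfaces
of `Δ`, and turns the linear quotient condition `σ_l \ σ_j = {k}`, `k ∈ σ_i \ σ_j` into
`F_j \ F_l = {k}`, `k ∉ F_i`. This is Björner–Wachs' criterion for a shelling order: given it,
`F_j \ {k}` is the required ridge below `σ ⊆ F_i ∩ F_j`; conversely, shelling the face
`F_i ∩ F_j` yields a ridge `τ ⊆ F_l` of `F_j`, and as facets are pairwise incomparable,
`F_j \ F_l` is exactly the vertex of `F_j` missing from `τ`. -/

theorem maximal_compl_iff {α : Type*} [BooleanAlgebra α] {P : α → Prop} {s : α} :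
    Maximal (fun t => P tᶜ) s ↔ Minimal P sᶜ := by
  refine ⟨fun h => ⟨h.prop, fun t ht hts => ?_⟩, fun h => ⟨h.prop, fun t ht hst => ?_⟩⟩
  · exact compl_le_iff_compl_le.1 (h.2 (show P tᶜᶜ by rwa [compl_compl]) (le_compl_comm.1 hts))
  · exact compl_le_compl_iff_le.1 (h.2 ht (compl_le_compl hst))

namespace List

open Finset

variable {α : Type*} [DecidableEq α]

def HasLinearQuotients (l : List (Finset α)) : Prop :=
  ∀ j i : Fin l.length, i < j →
    ∃ l0 : Fin l.length, l0 < j ∧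
      ∃ k : α, l.get l0 \ l.get j = {k} ∧ k ∈ l.get i \ l.get j

def IsShelling (l : List (Finset α)) : Prop :=
  ∀ j : Fin l.length, ∀ σ : Finset α, σ ⊆ l.get j → (∃ i, i < j ∧ σ ⊆ l.get i) →
    ∃ τ : Finset α, σ ⊆ τ ∧ τ ⊆ l.get j ∧ τ.card + 1 = (l.get j).card ∧
      ∃ i, i < j ∧ τ ⊆ l.get i

def HasRidgeExchange (l : List (Finset α)) : Prop :=
  ∀ j i : Fin l.length, i < j →
    ∃ l0 : Fin l.length, l0 < j ∧ ∃ k : α, l.get j \ l.get l0 = {k} ∧ k ∉ l.get i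

theorem HasRidgeExchange.isShelling {l : List (Finset α)} (h : HasRidgeExchange l) :
    IsShelling l := by
  rintro j σ hσj ⟨i, hij, hσi⟩
  obtain ⟨l0, hl0, k, hk, hki⟩ := h j i hij
  have hkj : k ∈ l.get j := (mem_sdiff.1 (hk ▸ Finset.mem_singleton_self k)).1
  refine ⟨(l.get j).erase k, fun x hx => mem_erase.2 ⟨?_, hσj hx⟩, Finset.erase_subset _ _,
    card_erase_add_one hkj, l0, hl0, fun x hx => ?_⟩
  · rintro rfl
    exact hki (hσi hx)
  · obtain ⟨hxk, hxj⟩ := mem_erase.1 hx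
    by_contra hxl0
    exact hxk (Finset.mem_singleton.1 (hk ▸ mem_sdiff.2 ⟨hxj, hxl0⟩))

theorem IsShelling.hasRidgeExchange {l : List (Finset α)} (h : IsShelling l)
    (hanti : ∀ a b : Fin l.length, l.get a ⊆ l.get b → a = b) : HasRidgeExchange l := by
  intro j i hij
  obtain ⟨τ, hστ, hτj, hcard, l0, hl0, hτl0⟩ :=
    h j (l.get i ∩ l.get j) Finset.inter_subset_right ⟨i, hij, Finset.inter_subset_left⟩
  obtain ⟨k, hk⟩ : ∃ k, l.get j \ τ = {k} :=
    card_eq_one.1 (by rw [card_sdiff_of_subset hτj]; omega)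
  have hsub : l.get j \ l.get l0 ⊆ {k} := hk ▸ sdiff_subset_sdiff subset_rfl hτl0
  have hne : (l.get j \ l.get l0).Nonempty := by
    rw [sdiff_nonempty]
    exact fun hjl0 => hl0.ne' (hanti j l0 hjl0)
  obtain ⟨hkj, hkτ⟩ := mem_sdiff.1 (hk ▸ Finset.mem_singleton_self k)
  exact ⟨l0, hl0, k, hne.subset_singleton_iff.1 hsub,
    fun hki => hkτ (hστ (mem_inter.2 ⟨hki, hkj⟩))⟩

variable [Fintype α]

theorem hasLinearQuotients_map_compl_iff {l : List (Finset α)} :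
    HasLinearQuotients (l.map compl) ↔ HasRidgeExchange l := by
  have hlen : (l.map compl).length = l.length := length_map compl
  simp only [HasLinearQuotients, HasRidgeExchange, get_eq_getElem, getElem_map,
    compl_sdiff_compl, mem_sdiff]
  constructor
  · intro h j i hij
    obtain ⟨l0, hl0, k, hk, -, hki⟩ := h (j.cast hlen.symm) (i.cast hlen.symm) hij
    exact ⟨l0.cast hlen, hl0, k, hk, hki⟩
  · intro h j i hij
    obtain ⟨l0, hl0, k, hk, hki⟩ := h (j.cast hlen) (i.cast hlen) hij
    have hkj := (mem_sdiff.1 (hk ▸ Finset.mem_singleton_self k)).1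
    exact ⟨l0.cast hlen.symm, hl0, k, hk, hkj, hki⟩

end List

theorem stmt18_general {n : ℕ} (Δ : Finset (Fin n) → Prop)
    -- the Alexander dual `Δ* = {σ : [n] \ σ ∉ Δ}`
    (Δstar : Finset (Fin n) → Prop)
    (hstar : ∀ σ, Δstar σ ↔ ¬Δ (Finset.univ \ σ))
    -- minimal nonfaces of `Δ`, i.e. supports of the minimal generators of `I_Δ`
    (NF : Set (Finset (Fin n))) (hNF : NF = {σ | ¬Δ σ ∧ ∀ τ ⊂ σ, Δ τ})
    -- facets of `Δ*`
    (FC : Set (Finset (Fin n)))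
    (hFC : FC = {F | Δstar F ∧ ∀ G, Δstar G → F ⊆ G → F = G}) :
    -- `I_Δ` has linear quotients for some order of the minimal generators …
    (∃ l : List (Finset (Fin n)), l.Nodup ∧ (∀ σ, σ ∈ l ↔ σ ∈ NF) ∧
      ∀ j i : Fin l.length, i < j →
        ∃ l0 : Fin l.length, l0 < j ∧ ∃ k : Fin n,
          l.get l0 \ l.get j = {k} ∧ k ∈ l.get i \ l.get j) ↔
    -- … iff the facets of `Δ*` admit a (nonpure) shelling: for each `j`, the
    -- complex `(∪_{i<j} ⟨F_i⟩) ∩ ⟨F_j⟩` is pure of dimension `dim F_j - 1`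
    (∃ l : List (Finset (Fin n)), l.Nodup ∧ (∀ F, F ∈ l ↔ F ∈ FC) ∧
      ∀ j : Fin l.length, ∀ σ : Finset (Fin n), σ ⊆ l.get j →
        (∃ i, i < j ∧ σ ⊆ l.get i) →
        ∃ τ : Finset (Fin n), σ ⊆ τ ∧ τ ⊆ l.get j ∧
          τ.card + 1 = (l.get j).card ∧ ∃ i, i < j ∧ τ ⊆ l.get i) := by
  have hFC' : FC = {F | Maximal (fun F => ¬Δ Fᶜ) F} := by
    simp only [hFC, hstar, ← Finset.compl_eq_univ_sdiff, maximal_iff]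
  have hNF' : NF = {σ | Minimal (fun σ => ¬Δ σ) σ} := by
    simp only [hNF, minimal_iff_forall_lt, not_not]
  have hfacet : ∀ F, F ∈ FC ↔ Fᶜ ∈ NF := fun F => by
    rw [hFC', hNF']
    exact maximal_compl_iff (P := fun σ => ¬Δ σ)
  constructor
  · rintro ⟨l, hnd, hmem, hlq⟩
    refine ⟨l.map compl, hnd.map compl_injective, fun F => ?_, ?_⟩
    · rw [List.mem_map_of_involutive compl_involutive, hmem, hfacet]
    · refine List.HasRidgeExchange.isShelling ?_
      rwa [← List.hasLinearQuotients_map_compl_iff, List.map_map, compl_comp_compl, List.map_id]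
  · rintro ⟨l, hnd, hmem, hsh⟩
    have hmax : ∀ a, Maximal (fun F => ¬Δ Fᶜ) (l.get a) := fun a => by
      simpa only [hFC', Set.mem_ofPred_eq] using (hmem _).1 (l.get_mem a)
    have hanti : ∀ a b, l.get a ⊆ l.get b → a = b := fun a b hab =>
      hnd.get_inj_iff.1 ((hmax a).eq_of_le (hmax b).prop hab)
    refine ⟨l.map compl, hnd.map compl_injective, fun σ => ?_,
      List.hasLinearQuotients_map_compl_iff.2 (List.IsShelling.hasRidgeExchange hsh hanti)⟩
    rw [List.mem_map_of_involutive compl_involutive, hmem, hfacet, compl_compl]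

theorem stmt18 {n : ℕ} (Δ : Finset (Fin n) → Prop)
    -- `Δ` is a simplicial complex
    (hdown : ∀ σ τ : Finset (Fin n), σ ⊆ τ → Δ τ → Δ σ)
    -- the Alexander dual `Δ* = {σ : [n] \ σ ∉ Δ}`
    (Δstar : Finset (Fin n) → Prop)
    (hstar : ∀ σ, Δstar σ ↔ ¬Δ (Finset.univ \ σ))
    -- minimal nonfaces of `Δ`, i.e. supports of the minimal generators of `I_Δ`
    (NF : Set (Finset (Fin n))) (hNF : NF = {σ | ¬Δ σ ∧ ∀ τ ⊂ σ, Δ τ})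
    -- facets of `Δ*`
    (FC : Set (Finset (Fin n)))
    (hFC : FC = {F | Δstar F ∧ ∀ G, Δstar G → F ⊆ G → F = G}) :
    -- `I_Δ` has linear quotients for some order of the minimal generators …
    (∃ l : List (Finset (Fin n)), l.Nodup ∧ (∀ σ, σ ∈ l ↔ σ ∈ NF) ∧
      ∀ j i : Fin l.length, i < j →
        ∃ l0 : Fin l.length, l0 < j ∧ ∃ k : Fin n,
          l.get l0 \ l.get j = {k} ∧ k ∈ l.get i \ l.get j) ↔
    -- … iff the facets of `Δ*` admit a (nonpure) shelling: for each `j`, the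
    -- complex `(∪_{i<j} ⟨F_i⟩) ∩ ⟨F_j⟩` is pure of dimension `dim F_j - 1`
    (∃ l : List (Finset (Fin n)), l.Nodup ∧ (∀ F, F ∈ l ↔ F ∈ FC) ∧
      ∀ j : Fin l.length, ∀ σ : Finset (Fin n), σ ⊆ l.get j →
        (∃ i, i < j ∧ σ ⊆ l.get i) →
        ∃ τ : Finset (Fin n), σ ⊆ τ ∧ τ ⊆ l.get j ∧
          τ.card + 1 = (l.get j).card ∧ ∃ i, i < j ∧ τ ⊆ l.get i) :=
  stmt18_general Δ Δstar hstar NF hNF FC hFC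
end
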